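/- arXiv:2508.16345 — 2 statements merged into one kernel-verified Lean document; each statement's English description precedes it below -/
import Mathlib

section
/- Let M=(S,A,T) be a k-dimensional Euclidean Markov decision process, φ ⊆ S a safety property, γ ∈ ℝ^k a granularity vector with γᵢ > 0 for all i, ω ∈ ℝ^k an offset vector, and let T_{M,γ,ω} = (P, A, →) be the induced finite labeled transition system over the grid P. If ν : P → 2^A is a shield for T_{M,γ,ω} with respect to φ, then the strategy σ : S → 2^A defined by σ(s) = ν([s]) is a shield for M with respect to φ, i.e., every run s₀a₀s₁a₁… of M with aᵢ ∈ σ(sᵢ) for all i satisfies sᵢ ∈ φ for all i. -/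
open MeasureTheory

/-- The grid cell of index `p`: product of half-open intervals
`[ωᵢ + pᵢγᵢ, ωᵢ + (pᵢ+1)γᵢ)`. -/
def Cell {k : ℕ} (γ ω : Fin k → ℝ) (p : Fin k → ℤ) : Set (Fin k → ℝ) :=
  {s | ∀ i, ω i + p i * γ i ≤ s i ∧ s i < ω i + (p i + 1) * γ i}

/-- The index of the unique cell containing `s`. -/
noncomputable def cellIdx {k : ℕ} (γ ω : Fin k → ℝ) (s : Fin k → ℝ) : Fin k → ℤ :=
  fun i => ⌊(s i - ω i) / γ i⌋

/-- Transition relation of the induced finite labeled transition system: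
`C →ᵃ C'` iff some state of `C ∩ S` can move to some state of `C' ∩ S` with
positive density. -/
def CellTrans {k : ℕ} {A : Type*} (S : Set (Fin k → ℝ))
    (T : (Fin k → ℝ) → A → (Fin k → ℝ) → ℝ) (γ ω : Fin k → ℝ)
    (p : Fin k → ℤ) (a : A) (q : Fin k → ℤ) : Prop :=
  ∃ s ∈ Cell γ ω p ∩ S, ∃ s' ∈ Cell γ ω q ∩ S, T s a s' > 0

/-- If `ν` is a shield for the induced transition system `T_{M,γ,ω}` w.r.t. `φ`,
then `σ(s) = ν([s])` is a shield for the EMDP `M` w.r.t. `φ`. -/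
theorem shield_transfer {k : ℕ} {A : Type*} [Fintype A] [Nonempty A]
    (S : Set (Fin k → ℝ)) (hSclosed : IsClosed S)
    (hSbounded : Bornology.IsBounded S)
    (T : (Fin k → ℝ) → A → (Fin k → ℝ) → ℝ)
    (hTnonneg : ∀ s ∈ S, ∀ a : A, ∀ s', 0 ≤ T s a s')
    (hTint : ∀ s ∈ S, ∀ a : A, ∫ s' in S, T s a s' = 1)
    (φ : Set (Fin k → ℝ)) (hφ : φ ⊆ S)
    (γ ω : Fin k → ℝ) (hγ : ∀ i, 0 < γ i)
    (ν : (Fin k → ℤ) → Set A)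
    -- `ν` is a shield for `T_{M,γ,ω}` w.r.t. `φ`: every outcome cell run is safe
    (hshield : ∀ (C : ℕ → Fin k → ℤ) (a : ℕ → A),
      (∀ i, CellTrans S T γ ω (C i) (a i) (C (i + 1))) →
      (∀ i, a i ∈ ν (C i)) →
      ∀ i, Cell γ ω (C i) ∩ S ⊆ φ) :
    -- then `σ(s) = ν([s])` is a shield for `M` w.r.t. `φ`: every run of `M`
    -- that is an outcome of `σ` is safe
    ∀ (s : ℕ → Fin k → ℝ) (a : ℕ → A),
      (∀ i, s i ∈ S) →
      (∀ i, T (s i) (a i) (s (i + 1)) > 0) →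
      (∀ i, a i ∈ ν (cellIdx γ ω (s i))) →
      ∀ i, s i ∈ φ := by
  intro s a hs ht ha i
  have hmem : ∀ j, s j ∈ Cell γ ω (cellIdx γ ω (s j)) := by
    intro j
    intro i
    have hγi := hγ i
    constructor
    · have := Int.floor_le ((s j i - ω i) / γ i)
      have h2 : (⌊(s j i - ω i) / γ i⌋ : ℝ) * γ i ≤ s j i - ω i := by
        rwa [← le_div_iff₀ hγi]
      simp only [cellIdx]
      linarith
    · have := Int.lt_floor_add_one ((s j i - ω i) / γ i)
      have h2 : s j i - ω i < (⌊(s j i - ω i) / γ i⌋ + 1 : ℝ) * γ i := by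
        rwa [← div_lt_iff₀ hγi]
      simp only [cellIdx]
      push_cast
      linarith
  exact hshield (fun j => cellIdx γ ω (s j)) a
    (fun j => ⟨s j, ⟨hmem j, hs j⟩, s (j+1), ⟨hmem (j+1), hs (j+1)⟩, ht j⟩)
    ha i ⟨hmem i, hs i⟩
end

section
/- Let M=(S,A,T) be a k-dimensional Euclidean Markov decision process, φ ⊆ S a safety property, γ ∈ ℝ^k with γᵢ > 0, ω ∈ ℝ^k, P the induced grid, T_{M,γ,ω} = (P,A,→) the induced transition system, C⁰ = { C ∈ P | C ∩ S ⊆ φ }, C_φ the greatest fixed point of the safe-cell operator, and ν_φ the most permissive shield. Then every run s₀a₀s₁a₁… of M with [s₀] ∈ C_φ and aᵢ ∈ ν_φ([sᵢ]) for all i ≥ 0 satisfies sᵢ ∈ φ for all i ≥ 0. -/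
open MeasureTheory

/-- The safe-cell operator `F(X) = C⁰ ∩ { C | ∃a ∈ A, ∀C', C →ᵃ C' ⟹ C' ∈ X }`. -/
def safeOp {P A : Type*} (tr : P → A → P → Prop) (C0 : Set P) (X : Set P) : Set P :=
  C0 ∩ {C | ∃ a : A, ∀ C', tr C a C' → C' ∈ X}

/-- The most permissive shield `ν_φ(C) = { a | ∀C', C →ᵃ C' ⟹ C' ∈ C_φ }`. -/
def permShield {P A : Type*} (tr : P → A → P → Prop) (Cphi : Set P) (C : P) : Set A :=
  {a | ∀ C', tr C a C' → C' ∈ Cphi}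

lemma mem_cellIdx {k : ℕ} (γ ω : Fin k → ℝ) (hγ : ∀ i, 0 < γ i) (s : Fin k → ℝ) :
    s ∈ Cell γ ω (cellIdx γ ω s) := by
  intro i
  have hg := hγ i
  have h1 : (⌊(s i - ω i) / γ i⌋ : ℝ) ≤ (s i - ω i) / γ i := Int.floor_le _
  have h2 : (s i - ω i) / γ i < ⌊(s i - ω i) / γ i⌋ + 1 := Int.lt_floor_add_one _
  constructor
  · simp only [cellIdx]
    nlinarith [mul_le_mul_of_nonneg_right h1 hg.le, mul_div_cancel₀ (s i - ω i) hg.ne']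
  · simp only [cellIdx]
    nlinarith [mul_lt_mul_of_pos_right h2 hg, mul_div_cancel₀ (s i - ω i) hg.ne']

/-- End-to-end safety: every run of the EMDP `M` that starts in a safe cell and
follows the most permissive shield `ν_φ` (derived from the greatest fixed point
`C_φ` of the safe-cell operator over the grid, with
`C⁰ = { C ∈ P | C ∩ S ⊆ φ }`) satisfies the safety property `φ` forever. -/
theorem shielded_runs_safe {k : ℕ} {A : Type*} [Fintype A] [Nonempty A]
    (S : Set (Fin k → ℝ)) (hSclosed : IsClosed S)
    (hSbounded : Bornology.IsBounded S)
    (T : (Fin k → ℝ) → A → (Fin k → ℝ) → ℝ)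
    (hTnonneg : ∀ s ∈ S, ∀ a : A, ∀ s', 0 ≤ T s a s')
    (hTint : ∀ s ∈ S, ∀ a : A, ∫ s' in S, T s a s' = 1)
    (φ : Set (Fin k → ℝ)) (hφ : φ ⊆ S)
    (γ ω : Fin k → ℝ) (hγ : ∀ i, 0 < γ i)
    (C0 : Set (Fin k → ℤ))
    (hC0 : C0 = {p | (Cell γ ω p ∩ S).Nonempty ∧ Cell γ ω p ∩ S ⊆ φ})
    (Cphi : Set (Fin k → ℤ))
    (hfix : safeOp (CellTrans S T γ ω) C0 Cphi = Cphi)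
    (hgreatest : ∀ X, safeOp (CellTrans S T γ ω) C0 X = X → X ⊆ Cphi) :
    ∀ (s : ℕ → Fin k → ℝ) (a : ℕ → A),
      (∀ i, s i ∈ S) →
      (∀ i, T (s i) (a i) (s (i + 1)) > 0) →
      cellIdx γ ω (s 0) ∈ Cphi →
      (∀ i, a i ∈ permShield (CellTrans S T γ ω) Cphi (cellIdx γ ω (s i))) →
      ∀ i, s i ∈ φ := by
  intro s a hS hT h0 hshield
  have hcell : ∀ i, s i ∈ Cell γ ω (cellIdx γ ω (s i)) := fun i => mem_cellIdx γ ω hγ (s i)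
  have hCphi : ∀ i, cellIdx γ ω (s i) ∈ Cphi := by
    intro i
    induction i with
    | zero => exact h0
    | succ n ih =>
      apply hshield n
      exact ⟨s n, ⟨hcell n, hS n⟩, s (n+1), ⟨hcell (n+1), hS (n+1)⟩, hT n⟩
  have hsub : Cphi ⊆ C0 := by
    rw [← hfix]; exact Set.inter_subset_left
  intro i
  have := hsub (hCphi i)
  rw [hC0] at this
  exact this.2 ⟨hcell i, hS i⟩
end
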